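/- Let l₀,…,l_r and w₀,…,w_r be positive integers with l_i·w_i = l_j·w_j for all i,j. Suppose l_i = g_i·l_i' where g_i = lcm_{j≠i}(gcd(l_i,l_j)). Then for each i, l_i' divides w_j for every j ≠ i, and hence l_i' divides gcd(w_j : j ≠ i). -/
import Mathlib


/-- `l' i` divides `w j` for every `j ≠ i`, hence divides
`gcd(w j : j ≠ i)`. -/
theorem stmt1 (r : ℕ) (l w l' : Fin (r + 1) → ℕ)
    (hl : ∀ i, 0 < l i) (hw : ∀ i, 0 < w i)
    (hhom : ∀ i j, l i * w i = l j * w j)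
    (hfact : ∀ i, l i =
      ((Finset.univ.erase i).lcm (fun j => Nat.gcd (l i) (l j))) * l' i) :
    ∀ i, (∀ j, j ≠ i → l' i ∣ w j) ∧
      l' i ∣ (Finset.univ.erase i).gcd w := by
  intro i
  have key : ∀ j, j ≠ i → l' i ∣ w j := by
    intro j hj
    set d := Nat.gcd (l i) (l j) with hd
    have hd0 : 0 < d := Nat.gcd_pos_of_pos_left _ (hl i)
    have hdg : d ∣ (Finset.univ.erase i).lcm (fun j => Nat.gcd (l i) (l j)) :=
      Finset.dvd_lcm (Finset.mem_erase.mpr ⟨hj, Finset.mem_univ j⟩)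
    -- l' i ∣ l i / d
    have h1 : l' i ∣ l i / d := by
      obtain ⟨c, hc⟩ := hdg
      have : l i = d * (c * l' i) := by
        rw [hfact i, hc]; ring
      rw [this, Nat.mul_div_cancel_left _ hd0]
      exact Dvd.intro_left c rfl
    -- l i / d ∣ w j
    have h2 : l i / d ∣ w j := by
      have hco : Nat.Coprime (l i / d) (l j / d) :=
        Nat.coprime_div_gcd_div_gcd hd0
      have heq : (l i / d) * w i = (l j / d) * w j := by
        have := hhom i j
        have hdi : d ∣ l i := Nat.gcd_dvd_left _ _
        have hdj : d ∣ l j := Nat.gcd_dvd_right _ _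
        obtain ⟨a, ha⟩ := hdi
        obtain ⟨b, hb⟩ := hdj
        rw [ha, hb, Nat.mul_div_cancel_left _ hd0, Nat.mul_div_cancel_left _ hd0]
        rw [ha, hb] at this
        exact Nat.eq_of_mul_eq_mul_left hd0 (by rw [mul_assoc, mul_assoc] at this; exact this)
      have : l i / d ∣ (l j / d) * w j := ⟨w i, heq.symm⟩
      exact hco.dvd_of_dvd_mul_left this
    exact h1.trans h2
  exact ⟨key, Finset.dvd_gcd fun j hjm =>
    key j (Finset.mem_erase.mp hjm).1⟩
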